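/- arXiv:1510.07778 — 6 statements merged into one kernel-verified Lean document; each statement's English description precedes it below -/
import Mathlib

section
/- Let Γ be a connected simple graph on at least 5 vertices. If every induced connected subgraph of Γ on exactly 4 vertices is a complete graph K₄, then Γ is itself a complete graph. -/
lemma cross_lemma {V : Type*} {G : SimpleGraph V} {x y : V} (w : G.Walk x y)
    (S : Set V) (hx : x ∈ S) (hy : y ∉ S) : ∃ u ∈ S, ∃ d, d ∉ S ∧ G.Adj u d := by
  induction w with
  | nil => exact absurd hx hy
  | @cons a b c h p ih =>
    by_cases hm : b ∈ S
    · exact ih hm hy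
    · exact ⟨a, hx, b, hm, h⟩

theorem stmt0 {V : Type*} [Fintype V] (G : SimpleGraph V)
    (hcard : 5 ≤ Fintype.card V) (hconn : G.Connected)
    (h4 : ∀ S : Finset V, S.card = 4 → (G.induce (S : Set V)).Connected →
      ∀ a ∈ S, ∀ b ∈ S, a ≠ b → G.Adj a b) :
    ∀ a b : V, a ≠ b → G.Adj a b := by
  classical
  have key : ∀ a b c : V, G.Adj a b → G.Adj b c → a ≠ c → G.Adj a c := by
    intro a b c hab hbc hac
    -- find e outside {a,b,c}
    obtain ⟨e, he⟩ : ∃ e, e ∉ ({a, b, c} : Finset V) := by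
      by_contra hco
      push_neg at hco
      have hsub : (Finset.univ : Finset V) ⊆ {a, b, c} := fun x _ => hco x
      have h1 : ({a, b, c} : Finset V).card ≤ 3 := by
        apply (Finset.card_insert_le _ _).trans
        have : ({b, c} : Finset V).card ≤ 2 :=
          (Finset.card_insert_le _ _).trans (by simp)
        omega
      have := Finset.card_le_card hsub
      rw [Finset.card_univ] at this
      omega
    obtain ⟨w⟩ := hconn a e
    obtain ⟨u, hu, d, hd, hud⟩ := cross_lemma w (↑({a, b, c} : Finset V))
      (by simp) (by simpa using he)
    simp only [Finset.coe_insert, Finset.coe_singleton, Set.mem_insert_iff,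
      Set.mem_singleton_iff] at hu hd
    push_neg at hd
    obtain ⟨hda, hdb, hdc⟩ := hd
    have hab' : a ≠ b := hab.ne
    have hbc' : b ≠ c := hbc.ne
    set S : Finset V := {a, b, c, d} with hS
    have hcard4 : S.card = 4 := by
      rw [hS]
      rw [Finset.card_insert_of_notMem (by simp [hab', hac, Ne.symm hda]),
        Finset.card_insert_of_notMem (by simp [hbc', Ne.symm hdb]),
        Finset.card_insert_of_notMem (by simp [Ne.symm hdc]),
        Finset.card_singleton]
    have hmem : ∀ x : V, x ∈ (↑S : Set V) ↔ x = a ∨ x = b ∨ x = c ∨ x = d := by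
      intro x; simp [hS]
    have hma : a ∈ (↑S : Set V) := (hmem a).2 (Or.inl rfl)
    have hmb : b ∈ (↑S : Set V) := (hmem b).2 (Or.inr (Or.inl rfl))
    have hmc : c ∈ (↑S : Set V) := (hmem c).2 (Or.inr (Or.inr (Or.inl rfl)))
    have hmd : d ∈ (↑S : Set V) := (hmem d).2 (Or.inr (Or.inr (Or.inr rfl)))
    -- reachability helpers in the induced graph
    have adj' : ∀ (x y : V) (hx : x ∈ (↑S : Set V)) (hy : y ∈ (↑S : Set V)),
        G.Adj x y → (G.induce (↑S : Set V)).Adj ⟨x, hx⟩ ⟨y, hy⟩ := by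
      intro x y hx hy h
      exact h
    have rb : ∀ x (hx : x ∈ (↑S : Set V)),
        (G.induce (↑S : Set V)).Reachable ⟨b, hmb⟩ ⟨x, hx⟩ := by
      intro x hx
      have hrd : (G.induce (↑S : Set V)).Reachable ⟨b, hmb⟩ ⟨d, hmd⟩ := by
        rcases hu with hu | hu | hu
        · exact ((adj' b a hmb hma hab.symm).reachable).trans
            (adj' a d hma hmd (hu ▸ hud)).reachable
        · exact (adj' b d hmb hmd (hu ▸ hud)).reachable
        · exact ((adj' b c hmb hmc hbc).reachable).trans
            (adj' c d hmc hmd (hu ▸ hud)).reachable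
      rcases (hmem x).1 hx with h | h | h | h
      · exact (adj' b x hmb hx (by rw [h]; exact hab.symm)).reachable
      · rw [show (⟨x, hx⟩ : (↑S : Set V)) = ⟨b, hmb⟩ from Subtype.ext h]
      · exact (adj' b x hmb hx (by rw [h]; exact hbc)).reachable
      · rw [show (⟨x, hx⟩ : (↑S : Set V)) = ⟨d, hmd⟩ from Subtype.ext h]
        exact hrd
    have hconnS : (G.induce (↑S : Set V)).Connected := by
      rw [SimpleGraph.connected_iff]
      refine ⟨fun x y => ?_, ⟨⟨b, hmb⟩⟩⟩
      obtain ⟨x, hx⟩ := x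
      obtain ⟨y, hy⟩ := y
      exact (rb x hx).symm.trans (rb y hy)
    exact h4 S hcard4 hconnS a (by simp [hS]) c (by simp [hS]) hac
  -- now conclude along walks
  have main : ∀ (x y : V) (w : G.Walk x y), x ≠ y → G.Adj x y := by
    intro x y w
    induction w with
    | nil => intro h; exact absurd rfl h
    | @cons a b c h p ih =>
      intro hac
      by_cases hbc : b = c
      · subst hbc; exact h
      · have hbc' := ih hbc
        by_cases hab : a = b
        · subst hab; exact hbc'
        · exact key a b c h hbc' hac
  intro a b hab
  obtain ⟨w⟩ := hconn a b
  exact main a b w hab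
end

section
/- Let Γ be a connected simple graph on vertex set V with |V| ≥ 2, and let α, β be two distinct vertices of Γ. If every induced connected subgraph of Γ on 4 vertices is complete and |V| ≥ 5, then α and β are adjacent in Γ. -/
/-!
In a connected graph on at least four vertices, a path `a - b - c` with `a ≠ c` can be
extended by a vertex adjacent to one of `a, b, c`, which gives a connected induced subgraph on
four vertices; by hypothesis it is complete, so `a` and `c` are adjacent. Adjacency is thus
transitive on distinct vertices, and a shortest walk between non-adjacent vertices of a
connected graph would contain an induced path `x - a - b`.
-/

namespace SimpleGraph

variable {V : Type*} {G : SimpleGraph V}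

theorem Reachable.exists_adj_of_mem_of_notMem {s : Set V} {u v : V} (huv : G.Reachable u v)
    (hu : u ∈ s) (hv : v ∉ s) : ∃ x ∈ s, ∃ y ∉ s, G.Adj x y :=
  let ⟨d, _, hd₁, hd₂⟩ := huv.some.exists_boundary_dart s hu hv
  ⟨d.fst, hd₁, d.snd, hd₂, d.adj⟩

theorem Connected.induce_insert {s : Set V} {x y : V} (hs : (G.induce s).Connected)
    (hx : x ∈ s) (hxy : G.Adj x y) : (G.induce (insert y s)).Connected := by
  rw [Set.insert_eq, Set.union_comm]
  exact connected_induce_union hs.preconnected Preconnected.of_subsingleton hx rfl hxy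

theorem induce_triple_connected_of_adj {a b c : V} (hab : G.Adj a b) (hbc : G.Adj b c) :
    (G.induce {a, b, c}).Connected :=
  (induce_pair_connected_of_adj hbc).induce_insert (by simp) hab.symm

theorem Connected.adj_of_forall_adj_trans (hconn : G.Connected)
    (htrans : ∀ a b c, G.Adj a b → G.Adj b c → a ≠ c → G.Adj a c) {u v : V} (hne : u ≠ v) :
    G.Adj u v := by
  by_contra hnadj
  obtain ⟨p, hp⟩ := hconn.exists_walk_length_eq_dist u v
  obtain ⟨x, a, b, hxa, hab, hxb, hne'⟩ :=
    p.exists_adj_adj_not_adj_ne hp (hconn.one_lt_dist_of_ne_of_not_adj hne hnadj)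
  exact hxb (htrans x a b hxa hab hne')

theorem adj_of_adj_of_adj_of_induce_card_four [Fintype V] (hconn : G.Connected)
    (hcard : 4 ≤ Fintype.card V)
    (h4 : ∀ S : Finset V, S.card = 4 → (G.induce (S : Set V)).Connected →
      ∀ a ∈ S, ∀ b ∈ S, a ≠ b → G.Adj a b)
    {a b c : V} (hab : G.Adj a b) (hbc : G.Adj b c) (hac : a ≠ c) : G.Adj a c := by
  classical
  set S : Finset V := {a, b, c}
  have hS : S.card = 3 := Finset.card_eq_three.mpr ⟨a, b, c, hab.ne, hac, hbc.ne, rfl⟩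
  obtain ⟨v, -, hv⟩ := Finset.exists_mem_notMem_of_card_lt_card (s := S) (t := Finset.univ)
    (by rw [hS, Finset.card_univ]; omega)
  obtain ⟨x, hx, d, hd, hxd⟩ :=
    (hconn b v).exists_adj_of_mem_of_notMem (s := (S : Set V)) (by simp [S]) hv
  have hT : (insert d S).card = 4 := by rw [Finset.card_insert_of_notMem hd, hS]
  have hTconn : (G.induce (insert d S : Finset V)).Connected := by
    have hScoe : (S : Set V) = {a, b, c} := by simp [S]
    rw [Finset.coe_insert, hScoe]
    exact (induce_triple_connected_of_adj hab hbc).induce_insert (hScoe ▸ hx) hxd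
  exact h4 _ hT hTconn a (by simp [S]) c (by simp [S]) hac

end SimpleGraph

theorem stmt1_general {V : Type*} [Fintype V] (G : SimpleGraph V)
    (hconn : G.Connected)
    (α β : V) (hne : α ≠ β)
    (h4 : ∀ S : Finset V, S.card = 4 → (G.induce (S : Set V)).Connected →
      ∀ a ∈ S, ∀ b ∈ S, a ≠ b → G.Adj a b)
    (h5 : 5 ≤ Fintype.card V) :
    G.Adj α β :=
  hconn.adj_of_forall_adj_trans
    (fun _ _ _ ↦ G.adj_of_adj_of_adj_of_induce_card_four hconn (by omega) h4) hne

theorem stmt1 {V : Type*} [Fintype V] (G : SimpleGraph V)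
    (hconn : G.Connected) (h2 : 2 ≤ Fintype.card V)
    (α β : V) (hne : α ≠ β)
    (h4 : ∀ S : Finset V, S.card = 4 → (G.induce (S : Set V)).Connected →
      ∀ a ∈ S, ∀ b ∈ S, a ≠ b → G.Adj a b)
    (h5 : 5 ≤ Fintype.card V) :
    G.Adj α β :=
  stmt1_general G hconn α β hne h4 h5
end

section
/- In the path graph Γ on [n+1] (n ≥ 3), a connected induced subgraph γ (an interval) maximizes the quantity i(γ) — the number of connected induced subgraphs γ̃ of Γ such that either γ ∩ γ̃ is nonempty with γ ∩ γ̃ ≠ γ and γ ∩ γ̃ ≠ γ̃, or γ ∩ γ̃ = ∅ and γ ⊔ γ̃ induces a connected subgraph — only if γ is an interval of length ⌊(n+1)/2⌋ or ⌊n/2⌋ + 1. -/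
/-- An interval `{a, a+1, ..., b}` with `1 ≤ a ≤ b ≤ n+1`, viewed inside `[n+1]`. -/
def IsInterval (n : ℕ) (S : Finset ℕ) : Prop :=
  ∃ a b : ℕ, 1 ≤ a ∧ a ≤ b ∧ b ≤ n + 1 ∧ S = Finset.Icc a b

/-- `γ̃` either intersects `γ` nontrivially, or is disjoint from `γ` with
`γ ∪ γ̃` an interval (connected union in the path graph). -/
def iRel (n : ℕ) (γ J : Finset ℕ) : Prop :=
  (γ ∩ J ≠ ∅ ∧ γ ∩ J ≠ γ ∧ γ ∩ J ≠ J) ∨ (γ ∩ J = ∅ ∧ IsInterval n (γ ∪ J))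

/-- `i(γ)`: the number of intervals `γ̃` related to `γ` as above. -/
noncomputable def iCount (n : ℕ) (γ : Finset ℕ) : ℕ :=
  Nat.card {J : Finset ℕ // IsInterval n J ∧ iRel n γ J}

/-- `i_max`: the maximum of `i(γ)` over all intervals `γ`. -/
noncomputable def iMax (n : ℕ) : ℕ :=
  sSup {k | ∃ γ : Finset ℕ, IsInterval n γ ∧ iCount n γ = k}

lemma icc_inj {c d c' d' : ℕ} (h : c ≤ d) (h' : c' ≤ d')
    (he : Finset.Icc c d = Finset.Icc c' d') : c = c' ∧ d = d' := by
  have h1 : c ∈ Finset.Icc c' d' := he ▸ Finset.mem_Icc.2 ⟨le_refl c, h⟩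
  have h2 : c' ∈ Finset.Icc c d := he.symm ▸ Finset.mem_Icc.2 ⟨le_refl c', h'⟩
  have h3 : d ∈ Finset.Icc c' d' := he ▸ Finset.mem_Icc.2 ⟨h, le_refl d⟩
  have h4 : d' ∈ Finset.Icc c d := he.symm ▸ Finset.mem_Icc.2 ⟨h', le_refl d'⟩
  simp only [Finset.mem_Icc] at h1 h2 h3 h4
  omega

lemma inter_Icc (a b c d : ℕ) :
    Finset.Icc a b ∩ Finset.Icc c d = Finset.Icc (max a c) (min b d) := by
  ext x; simp only [Finset.mem_inter, Finset.mem_Icc]; omega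

/-- The pair finset encoding all intervals related to `Icc a b`. -/
def pairSet (n a b : ℕ) : Finset (ℕ × ℕ) :=
  (Finset.Icc 1 (a-1) ×ˢ Finset.Icc (a-1) (b-1)) ∪
  (Finset.Icc (a+1) (b+1) ×ˢ Finset.Icc (b+1) (n+1))

lemma mem_pairSet {n a b : ℕ} (p : ℕ × ℕ) :
    p ∈ pairSet n a b ↔
      (1 ≤ p.1 ∧ p.1 ≤ a - 1 ∧ a - 1 ≤ p.2 ∧ p.2 ≤ b - 1) ∨
      (a + 1 ≤ p.1 ∧ p.1 ≤ b + 1 ∧ b + 1 ≤ p.2 ∧ p.2 ≤ n + 1) := by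
  simp [pairSet, Finset.mem_union, Finset.mem_product, Finset.mem_Icc, and_assoc]

lemma key {n a b : ℕ} (ha : 1 ≤ a) (hab : a ≤ b) (hb : b ≤ n + 1) (J : Finset ℕ) :
    (IsInterval n J ∧ iRel n (Finset.Icc a b) J) ↔
      J ∈ (pairSet n a b).image (fun p => Finset.Icc p.1 p.2) := by
  constructor
  · rintro ⟨⟨c, d, hc, hcd, hd, rfl⟩, hrel⟩
    rw [Finset.mem_image]
    refine ⟨(c, d), ?_, rfl⟩
    rw [mem_pairSet]
    rcases hrel with ⟨hne, hnγ, hnJ⟩ | ⟨hdis, a', b', ha', hab', hb', hu⟩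
    · rw [inter_Icc] at hne hnγ hnJ
      have h1 : max a c ≤ min b d := by
        by_contra h
        exact hne (Finset.Icc_eq_empty h)
      have h2 : ¬ (c ≤ a ∧ b ≤ d) := by
        intro ⟨u, v⟩
        apply hnγ
        congr 1 <;> omega
      have h3 : ¬ (a ≤ c ∧ d ≤ b) := by
        intro ⟨u, v⟩
        apply hnJ
        congr 1 <;> omega
      simp only [max_le_iff, le_min_iff] at h1
      omega
    · rw [inter_Icc, Finset.Icc_eq_empty_iff] at hdis
      -- disjoint: d < a or b < c
      have hmem : ∀ x, x ∈ Finset.Icc a' b' ↔ ((a ≤ x ∧ x ≤ b) ∨ (c ≤ x ∧ x ≤ d)) := by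
        intro x
        rw [← hu]
        simp [Finset.mem_union, Finset.mem_Icc]
      have hxa : a' ≤ a ∧ b ≤ b' := by
        have := (hmem a).2 (Or.inl ⟨le_refl a, hab⟩)
        have := (hmem b).2 (Or.inl ⟨hab, le_refl b⟩)
        simp only [Finset.mem_Icc] at *
        omega
      have hxc : a' ≤ c ∧ d ≤ b' := by
        have := (hmem c).2 (Or.inr ⟨le_refl c, hcd⟩)
        have := (hmem d).2 (Or.inr ⟨hcd, le_refl d⟩)
        simp only [Finset.mem_Icc] at *
        omega
      rcases (by omega : d + 1 < a ∨ d + 1 = a ∨ b + 1 = c ∨ b + 1 < c) with h | h | h | h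
      · exfalso
        have := (hmem (d+1)).1 (by simp [Finset.mem_Icc]; omega)
        omega
      · left; omega
      · right; omega
      · exfalso
        have := (hmem (b+1)).1 (by simp [Finset.mem_Icc]; omega)
        omega
  · intro hJ
    rw [Finset.mem_image] at hJ
    obtain ⟨⟨c, d⟩, hp, rfl⟩ := hJ
    rw [mem_pairSet] at hp
    simp only at hp
    rcases hp with ⟨h1, h2, h3, h4⟩ | ⟨h1, h2, h3, h4⟩
    · -- left: c ≤ a-1, a-1 ≤ d ≤ b-1
      refine ⟨⟨c, d, h1, by omega, by omega, rfl⟩, ?_⟩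
      rcases (by omega : d + 1 = a ∨ a ≤ d) with h | h
      · -- adjacent on the left
        right
        constructor
        · rw [inter_Icc]; apply Finset.Icc_eq_empty; omega
        · refine ⟨c, b, h1, by omega, hb, ?_⟩
          ext x
          simp only [Finset.mem_union, Finset.mem_Icc]
          omega
      · -- crossing the left endpoint
        left
        rw [inter_Icc]
        refine ⟨?_, ?_, ?_⟩
        · rw [Ne, Finset.Icc_eq_empty_iff]; simp; omega
        · intro hEq
          have := icc_inj (by omega : max a c ≤ min b d) hab hEq
          omega
        · intro hEq
          have := icc_inj (by omega : max a c ≤ min b d) (by omega : c ≤ d) hEq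
          omega
    · -- right: a+1 ≤ c ≤ b+1 ≤ d ≤ n+1
      refine ⟨⟨c, d, by omega, by omega, h4, rfl⟩, ?_⟩
      rcases (by omega : c = b + 1 ∨ c ≤ b) with h | h
      · right
        constructor
        · rw [inter_Icc]; apply Finset.Icc_eq_empty; omega
        · refine ⟨a, d, ha, by omega, h4, ?_⟩
          ext x
          simp only [Finset.mem_union, Finset.mem_Icc]
          omega
      · left
        rw [inter_Icc]
        refine ⟨?_, ?_, ?_⟩
        · rw [Ne, Finset.Icc_eq_empty_iff]; simp; omega
        · intro hEq
          have := icc_inj (by omega : max a c ≤ min b d) hab hEq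
          omega
        · intro hEq
          have := icc_inj (by omega : max a c ≤ min b d) (by omega : c ≤ d) hEq
          omega

lemma iCount_eq {n a b : ℕ} (ha : 1 ≤ a) (hab : a ≤ b) (hb : b ≤ n + 1) :
    iCount n (Finset.Icc a b) = (b - a + 1) * (n + 1 - (b - a + 1)) := by
  unfold iCount
  have hEquiv : {J : Finset ℕ // IsInterval n J ∧ iRel n (Finset.Icc a b) J} ≃
      {J : Finset ℕ // J ∈ (pairSet n a b).image (fun p => Finset.Icc p.1 p.2)} :=
    Equiv.subtypeEquivRight (fun J => key ha hab hb J)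
  rw [Nat.card_congr hEquiv, Nat.card_eq_fintype_card, Fintype.card_coe]
  have hinj : Set.InjOn (fun p : ℕ × ℕ => Finset.Icc p.1 p.2) (pairSet n a b) := by
    rintro ⟨c, d⟩ hp ⟨c', d'⟩ hp' hEq
    rw [Finset.mem_coe, mem_pairSet] at hp hp'
    simp only at hp hp' hEq
    have h1 : c ≤ d := by rcases hp with h | h <;> omega
    have h2 : c' ≤ d' := by rcases hp' with h | h <;> omega
    have := icc_inj h1 h2 hEq
    simp [Prod.ext_iff]
    omega
  rw [Finset.card_image_of_injOn hinj]
  unfold pairSet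
  have hdisj : Disjoint (Finset.Icc 1 (a-1) ×ˢ Finset.Icc (a-1) (b-1))
      (Finset.Icc (a+1) (b+1) ×ˢ Finset.Icc (b+1) (n+1)) := by
    rw [Finset.disjoint_left]
    rintro ⟨c, d⟩ hp hq
    simp only [Finset.mem_product, Finset.mem_Icc] at hp hq
    omega
  rw [Finset.card_union_of_disjoint hdisj, Finset.card_product, Finset.card_product,
      Nat.card_Icc, Nat.card_Icc, Nat.card_Icc, Nat.card_Icc]
  obtain ⟨x, m, y, rfl, rfl, hny⟩ :
      ∃ x m y, a = x + 1 ∧ b = x + 1 + m ∧ n + 1 = x + 1 + m + y := ⟨a - 1, b - a, n + 1 - b, by omega, by omega, by omega⟩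
  rw [hny]
  have e1 : x + 1 - 1 + 1 - 1 = x := by omega
  have e2 : x + 1 + m - 1 + 1 - (x + 1 - 1) = m + 1 := by omega
  have e3 : x + 1 + m + 1 + 1 - (x + 1 + 1) = m + 1 := by omega
  have e4 : x + 1 + m + y + 1 - (x + 1 + m + 1) = y := by omega
  have e5 : x + 1 + m - (x + 1) + 1 = m + 1 := by omega
  have e6 : x + 1 + m + y - (m + 1) = x + y := by omega
  rw [e1, e2, e3, e4, e5, e6]
  ring

lemma amgm_le (c h e : ℕ) (h1 : c ≤ h) (h2 : h ≤ e) : c * (h + e - c) ≤ h * e := by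
  have hrw : h + e - c = (h - c) + e := by omega
  rw [hrw]
  have hc : h - c + c = h := by omega
  calc c * ((h - c) + e) = c * (h - c) + c * e := by ring
    _ ≤ e * (h - c) + c * e := by
        have : c ≤ e := le_trans h1 h2
        exact Nat.add_le_add_right (Nat.mul_le_mul_right _ this) _
    _ = ((h - c) + c) * e := by ring
    _ = h * e := by rw [hc]

lemma amgm_lt (c h e : ℕ) (h1 : c < h) (h2 : h ≤ e) : c * (h + e - c) < h * e := by
  have hle : c ≤ h + e := by omega
  zify [hle]
  have hhc : (c : ℤ) < h := by exact_mod_cast h1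
  have hhe : (h : ℤ) ≤ e := by exact_mod_cast h2
  nlinarith [mul_pos (by linarith : (0:ℤ) < (h:ℤ) - c) (by linarith : (0:ℤ) < (e:ℤ) - c)]

lemma bound_le (c k : ℕ) (hck : c ≤ k) : c * (k - c) ≤ (k / 2) * (k - k / 2) := by
  set h := k / 2 with hh
  set e := k - k / 2 with he
  have hke : k = h + e := by omega
  have hhe : h ≤ e := by omega
  rcases le_or_gt c h with hc | hc
  · have := amgm_le c h e hc hhe
    rw [hke]; exact this
  · have hce : e ≤ c := by omega
    have hc' : k - c ≤ h := by omega
    have hsym : c * (k - c) = (k - c) * (k - (k - c)) := by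
      have : k - (k - c) = c := by omega
      rw [this]; ring
    rw [hsym]
    have := amgm_le (k - c) h e hc' hhe
    have hfix : h + e - (k - c) = k - (k - c) := by omega
    rw [hfix] at this; exact this

lemma bound_eq (c k : ℕ) (hck : c ≤ k) (hk : 2 ≤ k)
    (heq : c * (k - c) = (k / 2) * (k - k / 2)) : c = k / 2 ∨ c = k - k / 2 := by
  set h := k / 2 with hh
  set e := k - k / 2 with he
  have hke : k = h + e := by omega
  have hhe : h ≤ e := by omega
  by_contra hcon
  push_neg at hcon
  obtain ⟨hc1, hc2⟩ := hcon
  rcases lt_or_gt_of_ne hc1 with hc | hc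
  · have := amgm_lt c h e hc hhe
    rw [← hke] at this
    exact absurd heq (ne_of_lt this)
  · -- c > h, c ≠ e, and e ≤ h + 1, so c > e
    have hce : e < c := by omega
    have hc' : k - c < h := by omega
    have hsym : c * (k - c) = (k - c) * (k - (k - c)) := by
      have : k - (k - c) = c := by omega
      rw [this]; ring
    have := amgm_lt (k - c) h e hc' hhe
    have hfix : h + e - (k - c) = k - (k - c) := by omega
    rw [hfix] at this
    rw [hsym] at heq
    exact absurd heq (ne_of_lt this)

lemma iMax_eq {n : ℕ} (hn : 3 ≤ n) :
    iMax n = ((n + 1) / 2) * (n + 1 - (n + 1) / 2) := by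
  unfold iMax
  apply IsGreatest.csSup_eq
  constructor
  · refine ⟨Finset.Icc 1 ((n+1)/2), ⟨1, (n+1)/2, le_refl 1, by omega, by omega, rfl⟩, ?_⟩
    rw [iCount_eq (le_refl 1) (by omega) (by omega)]
    congr 1 <;> omega
  · rintro k ⟨γ, ⟨a, b, ha, hab, hb, rfl⟩, hk⟩
    rw [iCount_eq ha hab hb] at hk
    rw [← hk]
    exact bound_le (b - a + 1) (n + 1) (by omega)

theorem stmt7 {n : ℕ} (hn : 3 ≤ n) (γ : Finset ℕ) (hγ : IsInterval n γ)
    (hmax : iCount n γ = iMax n) :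
    γ.card = (n + 1) / 2 ∨ γ.card = n / 2 + 1 := by
  obtain ⟨a, b, ha, hab, hb, rfl⟩ := hγ
  rw [iCount_eq ha hab hb, iMax_eq hn] at hmax
  have hcard : (Finset.Icc a b).card = b - a + 1 := by rw [Nat.card_Icc]; omega
  rw [hcard]
  have := bound_eq (b - a + 1) (n + 1) (by omega) (by omega) hmax
  omega
end

section
/- Let I = {a, a+1, ..., b} be an interval in [n+1] with 1 ≤ a ≤ b ≤ n+1, of size k = b − a + 1 with 1 ≤ k ≤ n. Then the number of intervals J ⊆ [n+1] that intersect I nontrivially (i.e. I ∩ J ∉ {∅, I, J}) plus the number of intervals J ⊆ [n+1] disjoint from I with I ∪ J an interval equals (k−1)(a−1) + (k−1)(n+1−b) + (a−1) + (n+1−b) when a > 1 and b < n+1, with the appropriate boundary terms dropped when a = 1 or b = n+1. -/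
open Finset

lemma icc_eq_icc {c d c' d' : ℕ} (h : c ≤ d) (heq : Finset.Icc c d = Finset.Icc c' d') :
    c = c' ∧ d = d' := by
  have h1 : c ∈ Finset.Icc c' d' := heq ▸ Finset.mem_Icc.2 ⟨le_refl c, h⟩
  have h2 : d ∈ Finset.Icc c' d' := heq ▸ Finset.mem_Icc.2 ⟨h, le_refl d⟩
  simp only [Finset.mem_Icc] at h1 h2
  have h3 : c' ∈ Finset.Icc c d := by
    rw [heq]; exact Finset.mem_Icc.2 ⟨le_refl c', by omega⟩
  have h4 : d' ∈ Finset.Icc c d := by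
    rw [heq]; exact Finset.mem_Icc.2 ⟨by omega, le_refl d'⟩
  simp only [Finset.mem_Icc] at h3 h4
  omega

lemma cond1_iff {n a b c d : ℕ} (ha : 1 ≤ a) (hab : a ≤ b) (hb : b ≤ n + 1)
    (hcd : c ≤ d) :
    (Finset.Icc a b ∩ Finset.Icc c d ≠ ∅ ∧ Finset.Icc a b ∩ Finset.Icc c d ≠ Finset.Icc a b ∧
      Finset.Icc a b ∩ Finset.Icc c d ≠ Finset.Icc c d) ↔
    ((c ≤ a - 1 ∧ a ≤ d ∧ d ≤ b - 1) ∨ (a + 1 ≤ c ∧ c ≤ b ∧ b + 1 ≤ d)) := by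
  have h1 : Finset.Icc a b ∩ Finset.Icc c d = Finset.Icc a b ↔ c ≤ a ∧ b ≤ d := by
    rw [Finset.inter_eq_left, Finset.Icc_subset_Icc_iff hab]
  have h2 : Finset.Icc a b ∩ Finset.Icc c d = Finset.Icc c d ↔ a ≤ c ∧ d ≤ b := by
    rw [Finset.inter_eq_right, Finset.Icc_subset_Icc_iff hcd]
  have h3 : Finset.Icc a b ∩ Finset.Icc c d ≠ ∅ ↔ max a c ≤ min b d := by
    rw [← Finset.nonempty_iff_ne_empty]
    constructor
    · rintro ⟨x, hx⟩
      simp only [Finset.mem_inter, Finset.mem_Icc] at hx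
      omega
    · intro h
      refine ⟨max a c, ?_⟩
      simp only [Finset.mem_inter, Finset.mem_Icc]
      omega
  rw [h3]
  constructor
  · rintro ⟨hne, hI, hJ⟩
    have hI' : ¬ (c ≤ a ∧ b ≤ d) := fun h => hI (h1.2 h)
    have hJ' : ¬ (a ≤ c ∧ d ≤ b) := fun h => hJ (h2.2 h)
    omega
  · rintro h
    refine ⟨by omega, fun heq => ?_, fun heq => ?_⟩
    · have := h1.1 heq; omega
    · have := h2.1 heq; omega

lemma cond2_iff {n a b c d : ℕ} (ha : 1 ≤ a) (hab : a ≤ b) (hb : b ≤ n + 1)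
    (hc : 1 ≤ c) (hcd : c ≤ d) (hd : d ≤ n + 1) :
    (Finset.Icc a b ∩ Finset.Icc c d = ∅ ∧ IsInterval n (Finset.Icc a b ∪ Finset.Icc c d)) ↔
    ((c ≤ a - 1 ∧ d = a - 1) ∨ (c = b + 1 ∧ d ≤ n + 1)) := by
  have h3 : Finset.Icc a b ∩ Finset.Icc c d = ∅ ↔ ¬ (max a c ≤ min b d) := by
    rw [← Finset.not_nonempty_iff_eq_empty]
    constructor
    · intro h hle
      exact h ⟨max a c, by simp only [Finset.mem_inter, Finset.mem_Icc]; omega⟩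
    · rintro h ⟨x, hx⟩
      simp only [Finset.mem_inter, Finset.mem_Icc] at hx
      omega
  constructor
  · rintro ⟨hemp, a', b', ha', hab', hb', hunion⟩
    rw [h3] at hemp
    rw [Finset.ext_iff] at hunion
    simp only [Finset.mem_union, Finset.mem_Icc] at hunion
    have k1 := hunion a
    have k2 := hunion b
    have k3 := hunion c
    have k4 := hunion d
    have k5 := hunion (a - 1)
    have k6 := hunion (b + 1)
    omega
  · rintro (⟨h1, h2⟩ | ⟨h1, h2⟩)
    · constructor
      · rw [h3]; omega
      · refine ⟨c, b, hc, by omega, by omega, ?_⟩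
        ext x
        simp only [Finset.mem_union, Finset.mem_Icc]
        omega
    · constructor
      · rw [h3]; omega
      · refine ⟨a, d, ha, by omega, hd, ?_⟩
        ext x
        simp only [Finset.mem_union, Finset.mem_Icc]
        omega

theorem stmt10 {n a b : ℕ} (ha : 1 ≤ a) (hab : a ≤ b) (hb : b ≤ n + 1)
    (hproper : b - a + 1 ≤ n) :
    Nat.card {J : Finset ℕ // IsInterval n J ∧
        (Finset.Icc a b ∩ J ≠ ∅ ∧ Finset.Icc a b ∩ J ≠ Finset.Icc a b ∧
          Finset.Icc a b ∩ J ≠ J)} +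
      Nat.card {J : Finset ℕ // IsInterval n J ∧ Finset.Icc a b ∩ J = ∅ ∧
        IsInterval n (Finset.Icc a b ∪ J)} =
    (b - a) * (a - 1) + (b - a) * (n + 1 - b) + ((a - 1) + (n + 1 - b)) := by
  classical
  set S1 : Finset (ℕ × ℕ) :=
    (Finset.Icc 1 (a-1) ×ˢ Finset.Icc a (b-1)) ∪ (Finset.Icc (a+1) b ×ˢ Finset.Icc (b+1) (n+1))
    with hS1
  set S2 : Finset (ℕ × ℕ) :=
    (Finset.Icc 1 (a-1) ×ˢ {a-1}) ∪ ({b+1} ×ˢ Finset.Icc (b+1) (n+1)) with hS2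
  -- bounds on members of S1
  have hS1mem : ∀ p ∈ S1, 1 ≤ p.1 ∧ p.1 ≤ p.2 ∧ p.2 ≤ n + 1 := by
    intro p hp
    simp only [hS1, Finset.mem_union, Finset.mem_product, Finset.mem_Icc] at hp
    omega
  have hS2mem : ∀ p ∈ S2, 1 ≤ p.1 ∧ p.1 ≤ p.2 ∧ p.2 ≤ n + 1 := by
    intro p hp
    simp only [hS2, Finset.mem_union, Finset.mem_product, Finset.mem_Icc,
      Finset.mem_singleton] at hp
    omega
  have key : ∀ (S : Finset (ℕ × ℕ)) (P : Finset ℕ → Prop),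
      (∀ p ∈ S, 1 ≤ p.1 ∧ p.1 ≤ p.2 ∧ p.2 ≤ n + 1) →
      (∀ c d : ℕ, 1 ≤ c → c ≤ d → d ≤ n + 1 → (P (Finset.Icc c d) ↔ (c, d) ∈ S)) →
      Nat.card {J : Finset ℕ // IsInterval n J ∧ P J} = S.card := by
    intro S P hSmem hiff
    have hset : {J : Finset ℕ | IsInterval n J ∧ P J}
        = ↑(S.image (fun p => Finset.Icc p.1 p.2)) := by
      ext J
      simp only [Set.mem_setOf_eq, Finset.coe_image, Set.mem_image, Finset.mem_coe]
      constructor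
      · rintro ⟨⟨c, d, hc, hcd, hd, rfl⟩, hP⟩
        exact ⟨(c, d), (hiff c d hc hcd hd).1 hP, rfl⟩
      · rintro ⟨⟨c, d⟩, hp, rfl⟩
        obtain ⟨h1, h2, h3⟩ := hSmem _ hp
        exact ⟨⟨c, d, h1, h2, h3, rfl⟩, (hiff c d h1 h2 h3).2 hp⟩
    have hcard : Nat.card {J : Finset ℕ // IsInterval n J ∧ P J}
        = (S.image (fun p => Finset.Icc p.1 p.2)).card := by
      have : Nat.card {J : Finset ℕ // IsInterval n J ∧ P J}
          = ({J : Finset ℕ | IsInterval n J ∧ P J}).ncard := Nat.card_coe_set_eq _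
      rw [this, hset, Set.ncard_coe_finset]
    rw [hcard, Finset.card_image_of_injOn]
    intro p hp q hq heq
    obtain ⟨h1, h2, h3⟩ := hSmem _ hp
    obtain ⟨e1, e2⟩ := icc_eq_icc h2 heq
    exact Prod.ext e1 e2
  have c1 : Nat.card {J : Finset ℕ // IsInterval n J ∧
      (Finset.Icc a b ∩ J ≠ ∅ ∧ Finset.Icc a b ∩ J ≠ Finset.Icc a b ∧
        Finset.Icc a b ∩ J ≠ J)} = S1.card := by
    apply key _ _ hS1mem
    intro c d hc hcd hd
    rw [cond1_iff ha hab hb hcd]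
    simp only [hS1, Finset.mem_union, Finset.mem_product, Finset.mem_Icc]
    omega
  have c2 : Nat.card {J : Finset ℕ // IsInterval n J ∧ Finset.Icc a b ∩ J = ∅ ∧
      IsInterval n (Finset.Icc a b ∪ J)} = S2.card := by
    apply key _ _ hS2mem
    intro c d hc hcd hd
    rw [cond2_iff ha hab hb hc hcd hd]
    simp only [hS2, Finset.mem_union, Finset.mem_product, Finset.mem_Icc,
      Finset.mem_singleton]
    omega
  rw [c1, c2]
  have d1 : Disjoint (Finset.Icc 1 (a-1) ×ˢ Finset.Icc a (b-1))
      ((Finset.Icc (a+1) b) ×ˢ Finset.Icc (b+1) (n+1)) := by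
    rw [Finset.disjoint_left]
    rintro ⟨c, d⟩ h1 h2
    simp only [Finset.mem_product, Finset.mem_Icc] at h1 h2
    omega
  have d2 : Disjoint (Finset.Icc 1 (a-1) ×ˢ ({a-1} : Finset ℕ))
      (({b+1} : Finset ℕ) ×ˢ Finset.Icc (b+1) (n+1)) := by
    rw [Finset.disjoint_left]
    rintro ⟨c, d⟩ h1 h2
    simp only [Finset.mem_product, Finset.mem_Icc, Finset.mem_singleton] at h1 h2
    omega
  rw [hS1, hS2, Finset.card_union_of_disjoint d1, Finset.card_union_of_disjoint d2]
  simp only [Finset.card_product, Nat.card_Icc, Finset.card_singleton]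
  have e1 : a - 1 + 1 - 1 = a - 1 := by omega
  have e2 : b - 1 + 1 - a = b - a := by omega
  have e3 : b + 1 - (a + 1) = b - a := by omega
  have e4 : n + 1 + 1 - (b + 1) = n + 1 - b := by omega
  rw [e1, e2, e3, e4]
  ring
end

section
/- Let P be the family of facets of a polytope indexed by intervals of [n+1] (proper connected induced subgraphs of the path graph), with two facets F_I, F_J intersecting iff the intervals I, J satisfy: I ∩ J ∈ {∅, I, J}, and if I ∩ J = ∅ then I ∪ J is not an interval. Then for any set S of intervals with |S| > i_max, the 'union of facets' graph on S (vertices S, edges between intersecting facets) has at most 2 connected components. -/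
/-- Two facets of the associahedron indexed by intervals `I, J` intersect iff
`I ∩ J ∈ {∅, I, J}` and it is not the case that `I ∩ J = ∅` with `I ∪ J` an interval. -/
def facetMeets (n : ℕ) (I J : Finset ℕ) : Prop :=
  (I ∩ J = ∅ ∨ I ∩ J = I ∨ I ∩ J = J) ∧ ¬(I ∩ J = ∅ ∧ IsInterval n (I ∪ J))

/-!
Encode the interval `[a, b] ⊆ [n+1]` by the chord `(a - 1, b + 1)` of a convex polygon with
vertices `0, …, n + 2`. Then `iRel` becomes crossing of chords, `i_max` is the largest number
`u v` (`u + v = n + 1`) of chords crossing a given chord, and two facets meet iff their chords do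
not cross.

If the facet graph on `S` had three components, let `X` be one of them and `Y` the rest of `S`:
every chord of `X` crosses every chord of `Y`. Pick `x₀ ∈ X` and `y₂, y₃ ∈ Y` in two different
components, so that every chord of `Y` crosses `y₂` or `y₃`. The endpoints of `X` split into
`e₁` inside and `e₂` outside `y₂`; the other polygon vertices split into `p₁` inside and `p₂`
outside `x₀`. Chords of `X` join the first two classes, chords of `Y` the last two, and the
chord joining an endpoint of `y₃` to an endpoint of `y₂` cannot lie in `Y`. Hence
`|S| < e₁ e₂ + p₁ p₂ ≤ (e₁ + p₁ - 1)(e₂ + p₂ - 1) + 1` with `e₁ + e₂ + p₁ + p₂ = n + 3`,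
so `|S| ≤ i_max`.
-/

open Finset

def Crosses (d e : ℕ × ℕ) : Prop :=
  d.1 < e.1 ∧ e.1 < d.2 ∧ d.2 < e.2 ∨ e.1 < d.1 ∧ d.1 < e.2 ∧ e.2 < d.2

def ends (d : ℕ × ℕ) : Finset ℕ := {d.1, d.2}

def inside (e : ℕ × ℕ) (E : Finset ℕ) : Finset ℕ := E.filter fun w => e.1 < w ∧ w < e.2

def outside (e : ℕ × ℕ) (E : Finset ℕ) : Finset ℕ := E.filter fun w => ¬(e.1 < w ∧ w < e.2)

lemma mem_ends {w : ℕ} {d : ℕ × ℕ} : w ∈ ends d ↔ w = d.1 ∨ w = d.2 := by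
  simp [ends]

lemma card_inside_add_card_outside (e : ℕ × ℕ) (E : Finset ℕ) :
    (inside e E).card + (outside e E).card = E.card :=
  card_filter_add_card_filter_not _

lemma Crosses.symm {d e : ℕ × ℕ} (h : Crosses d e) : Crosses e d := by
  unfold Crosses at *; omega

lemma Crosses.disjoint_ends {d e : ℕ × ℕ} (h : Crosses d e) : Disjoint (ends d) (ends e) := by
  simp only [disjoint_left, mem_ends]
  unfold Crosses at h; omega

lemma Crosses.mem_or_swap_mem {d e : ℕ × ℕ} {E : Finset ℕ} (h : Crosses d e)
    (h₁ : d.1 ∈ E) (h₂ : d.2 ∈ E) :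
    d ∈ inside e E ×ˢ outside e E ∨ d.swap ∈ inside e E ×ˢ outside e E := by
  unfold Crosses at h
  simp only [inside, outside, mem_product, mem_filter, Prod.fst_swap, Prod.snd_swap, h₁, h₂,
    true_and]
  omega

lemma card_le_card_of_forall_mem_or_swap_mem {D T : Finset (ℕ × ℕ)}
    (h : ∀ d ∈ D, d.1 < d.2 ∧ (d ∈ T ∨ d.swap ∈ T)) : D.card ≤ T.card := by
  classical
  refine card_le_card_of_injOn (fun d => if d ∈ T then d else d.swap) ?_ ?_
  · intro d hd
    by_cases hdT : d ∈ T
    · simp [hdT]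
    · simpa [hdT] using (h d hd).2.resolve_left hdT
  · intro d hd e he hde
    have hd' := (h d hd).1
    have he' := (h e he).1
    simp only at hde
    split_ifs at hde <;> simp only [Prod.ext_iff, Prod.fst_swap, Prod.snd_swap] at hde <;>
      exact Prod.ext_iff.2 ⟨by omega, by omega⟩

lemma card_le_mul_of_forall_crosses {D : Finset (ℕ × ℕ)} {E : Finset ℕ} {e : ℕ × ℕ}
    (hD : ∀ d ∈ D, d.1 < d.2 ∧ d.1 ∈ E ∧ d.2 ∈ E ∧ Crosses d e) :
    D.card ≤ (inside e E).card * (outside e E).card := by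
  rw [← card_product]
  exact card_le_card_of_forall_mem_or_swap_mem fun d hd =>
    ⟨(hD d hd).1, (hD d hd).2.2.2.mem_or_swap_mem (hD d hd).2.1 (hD d hd).2.2.1⟩

lemma card_lt_mul_of_forall_crosses {D : Finset (ℕ × ℕ)} {E : Finset ℕ} {e d₂ d₃ : ℕ × ℕ}
    (hD : ∀ d ∈ D, d.1 < d.2 ∧ d.1 ∈ E ∧ d.2 ∈ E ∧ Crosses d e)
    (hd₂ : d₂ ∈ D) (hd₃ : d₃ ∈ D) (hD₂₃ : ∀ d ∈ D, Crosses d d₂ ∨ Crosses d d₃) :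
    D.card < (inside e E).card * (outside e E).card := by
  have hT : ∀ d ∈ D, d ∈ inside e E ×ˢ outside e E ∨ d.swap ∈ inside e E ×ˢ outside e E :=
    fun d hd => (hD d hd).2.2.2.mem_or_swap_mem (hD d hd).2.1 (hD d hd).2.2.1
  simp only [mem_product, Prod.fst_swap, Prod.snd_swap] at hT
  obtain ⟨a, ha, haA⟩ : ∃ a ∈ ends d₃, a ∈ inside e E := by
    rcases hT d₃ hd₃ with h | h
    exacts [⟨_, mem_ends.2 (.inl rfl), h.1⟩, ⟨_, mem_ends.2 (.inr rfl), h.1⟩]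
  obtain ⟨b, hb, hbB⟩ : ∃ b ∈ ends d₂, b ∈ outside e E := by
    rcases hT d₂ hd₂ with h | h
    exacts [⟨_, mem_ends.2 (.inr rfl), h.2⟩, ⟨_, mem_ends.2 (.inl rfl), h.2⟩]
  -- a chord sharing an endpoint with both `d₂` and `d₃` crosses neither of them
  have hab : ∀ d ∈ D, a ∈ ends d → b ∈ ends d → False := fun d hd had hbd =>
    (hD₂₃ d hd).elim (fun h => disjoint_left.1 h.disjoint_ends hbd hb)
      (fun h => disjoint_left.1 h.disjoint_ends had ha)
  calc D.card ≤ ((inside e E ×ˢ outside e E).erase (a, b)).card := by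
        refine card_le_card_of_forall_mem_or_swap_mem fun d hd => ⟨(hD d hd).1, ?_⟩
        have h₁ : ¬(d.1 = a ∧ d.2 = b) := fun h =>
          hab d hd (mem_ends.2 (.inl h.1.symm)) (mem_ends.2 (.inr h.2.symm))
        have h₂ : ¬(d.2 = a ∧ d.1 = b) := fun h =>
          hab d hd (mem_ends.2 (.inr h.1.symm)) (mem_ends.2 (.inl h.2.symm))
        have := hT d hd
        simp only [mem_erase, ne_eq, Prod.ext_iff, mem_product, Prod.fst_swap, Prod.snd_swap]
        tauto
    _ < (inside e E ×ˢ outside e E).card := card_erase_lt_of_mem (mem_product.2 ⟨haA, hbB⟩)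
    _ = _ := card_product _ _

lemma exists_add_le_mul {x y a b c d : ℕ} (hx : 0 < x) (hxab : x ≤ a * b) (hycd : y < c * d) :
    ∃ u v, 1 ≤ u ∧ u + v + 2 = a + b + c + d ∧ x + y ≤ u * v := by
  obtain ⟨a, rfl⟩ := Nat.exists_eq_add_of_lt (Nat.pos_of_mul_pos_right (hx.trans_le hxab))
  obtain ⟨b, rfl⟩ := Nat.exists_eq_add_of_lt (Nat.pos_of_mul_pos_left (hx.trans_le hxab))
  obtain ⟨c, rfl⟩ := Nat.exists_eq_add_of_lt (Nat.pos_of_mul_pos_right (Nat.zero_lt_of_lt hycd))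
  obtain ⟨d, rfl⟩ := Nat.exists_eq_add_of_lt (Nat.pos_of_mul_pos_left (Nat.zero_lt_of_lt hycd))
  refine ⟨a + c + 1, b + d + 1, by omega, by omega, ?_⟩
  nlinarith

theorem card_add_card_le_of_forall_crosses {N : ℕ} {X Y : Finset (ℕ × ℕ)}
    (hX : ∀ x ∈ X, x.1 < x.2 ∧ x.2 < N) (hY : ∀ y ∈ Y, y.1 < y.2 ∧ y.2 < N)
    (hXY : ∀ x ∈ X, ∀ y ∈ Y, Crosses x y) {x₀ y₂ y₃ : ℕ × ℕ}
    (hx₀ : x₀ ∈ X) (hy₂ : y₂ ∈ Y) (hy₃ : y₃ ∈ Y)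
    (hY₂₃ : ∀ y ∈ Y, Crosses y y₂ ∨ Crosses y y₃) :
    ∃ u v, 1 ≤ u ∧ u + v + 2 = N ∧ X.card + Y.card ≤ u * v := by
  classical
  set E := X.biUnion ends
  set P := range N \ E
  have hE : ∀ x ∈ X, x.1 ∈ E ∧ x.2 ∈ E := fun x hx =>
    ⟨mem_biUnion.2 ⟨x, hx, mem_ends.2 (.inl rfl)⟩, mem_biUnion.2 ⟨x, hx, mem_ends.2 (.inr rfl)⟩⟩
  have hEN : E ⊆ range N := fun w hw => by
    obtain ⟨x, hx, hwx⟩ := mem_biUnion.1 hw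
    have := hX x hx
    rw [mem_ends] at hwx
    exact mem_range.2 (by omega)
  have hP : ∀ y ∈ Y, y.1 ∈ P ∧ y.2 ∈ P := by
    intro y hy
    have hnE : ∀ w ∈ ends y, w ∉ E := fun w hw hwE => by
      obtain ⟨x, hx, hwx⟩ := mem_biUnion.1 hwE
      exact disjoint_left.1 (hXY x hx y hy).disjoint_ends hwx hw
    have := hY y hy
    exact ⟨mem_sdiff.2 ⟨mem_range.2 (by omega), hnE _ (mem_ends.2 (.inl rfl))⟩,
      mem_sdiff.2 ⟨mem_range.2 (by omega), hnE _ (mem_ends.2 (.inr rfl))⟩⟩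
  have hsum : (inside y₂ E).card + (outside y₂ E).card +
      ((inside x₀ P).card + (outside x₀ P).card) = N := by
    rw [card_inside_add_card_outside, card_inside_add_card_outside, add_comm,
      card_sdiff_add_card_eq_card hEN, card_range]
  have hXcard : X.card ≤ (inside y₂ E).card * (outside y₂ E).card :=
    card_le_mul_of_forall_crosses fun x hx =>
      ⟨(hX x hx).1, (hE x hx).1, (hE x hx).2, hXY x hx y₂ hy₂⟩
  have hYcard : Y.card < (inside x₀ P).card * (outside x₀ P).card :=
    card_lt_mul_of_forall_crosses (fun y hy =>
      ⟨(hY y hy).1, (hP y hy).1, (hP y hy).2, (hXY x₀ hx₀ y hy).symm⟩) hy₂ hy₃ hY₂₃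
  obtain ⟨u, v, hu, huv, hcard⟩ := exists_add_le_mul (card_pos.2 ⟨x₀, hx₀⟩) hXcard hYcard
  exact ⟨u, v, hu, by omega, hcard⟩

theorem card_le_mul_of_two_lt_card_connectedComponent {V : Type*} [Fintype V] {N : ℕ}
    (G : SimpleGraph V) (f : V ↪ ℕ × ℕ) (hf : ∀ v, (f v).1 < (f v).2 ∧ (f v).2 < N)
    (hG : ∀ v w, ¬Crosses (f v) (f w) → G.Reachable v w)
    (h3 : 2 < Nat.card G.ConnectedComponent) :
    ∃ u w, 1 ≤ u ∧ u + w + 2 = N ∧ Fintype.card V ≤ u * w := by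
  classical
  rw [Nat.card_eq_fintype_card] at h3
  obtain ⟨c₁, c₂, c₃, h₁₂, h₁₃, h₂₃⟩ := Fintype.two_lt_card_iff.1 h3
  obtain ⟨v₁, rfl⟩ := c₁.exists_rep
  obtain ⟨v₂, rfl⟩ := c₂.exists_rep
  obtain ⟨v₃, rfl⟩ := c₃.exists_rep
  have hG' : ∀ v w, ¬Crosses (f v) (f w) → G.connectedComponentMk v = G.connectedComponentMk w :=
    fun v w h => SimpleGraph.ConnectedComponent.eq.2 (hG v w h)
  set X := univ.filter fun v => G.connectedComponentMk v = G.connectedComponentMk v₁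
  set Y := univ.filter fun v => G.connectedComponentMk v ≠ G.connectedComponentMk v₁
  have hXY : ∀ x ∈ X.map f, ∀ y ∈ Y.map f, Crosses x y := by
    simp only [forall_mem_map, mem_filter, mem_univ, true_and, X, Y]
    exact fun x hx y hy => by_contra fun h => hy (hG' y x (fun h' => h h'.symm) ▸ hx)
  have hY₂₃ : ∀ y ∈ Y.map f, Crosses y (f v₂) ∨ Crosses y (f v₃) := by
    simp only [forall_mem_map]
    refine fun y _ => by_contra fun h => h₂₃ ?_
    push Not at h
    exact (hG' y v₂ h.1).symm.trans (hG' y v₃ h.2)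
  obtain ⟨u, w, hu, huw, hcard⟩ := card_add_card_le_of_forall_crosses
    (forall_mem_map.2 fun v _ => hf v) (forall_mem_map.2 fun v _ => hf v) hXY
    (mem_map_of_mem f (mem_filter.2 ⟨mem_univ _, rfl⟩))
    (mem_map_of_mem f (mem_filter.2 ⟨mem_univ _, h₁₂.symm⟩))
    (mem_map_of_mem f (mem_filter.2 ⟨mem_univ _, h₁₃.symm⟩)) hY₂₃
  rw [card_map, card_map, card_filter_add_card_filter_not, card_univ] at hcard
  exact ⟨u, w, hu, huw, hcard⟩

lemma Icc_inter_Icc_eq_empty_iff {a b c d : ℕ} (hab : a ≤ b) (hcd : c ≤ d) :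
    Icc a b ∩ Icc c d = ∅ ↔ b < c ∨ d < a := by
  rw [← disjoint_iff_inter_eq_empty, disjoint_left]
  constructor
  · intro h
    by_contra! h'
    exact h (a := max a c) (by simp only [mem_Icc]; omega) (by simp only [mem_Icc]; omega)
  · intro h x
    simp only [mem_Icc]
    omega

lemma isInterval_Icc_union_Icc_iff {n a b c d : ℕ} (ha : 1 ≤ a) (hab : a ≤ b) (hb : b ≤ n + 1)
    (hc : 1 ≤ c) (hcd : c ≤ d) (hd : d ≤ n + 1) :
    IsInterval n (Icc a b ∪ Icc c d) ↔ c ≤ b + 1 ∧ a ≤ d + 1 := by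
  constructor
  · rintro ⟨p, q, -, -, -, h⟩
    have hmem : ∀ x, (a ≤ x ∧ x ≤ b ∨ c ≤ x ∧ x ≤ d) ↔ p ≤ x ∧ x ≤ q := fun x => by
      simpa only [mem_union, mem_Icc] using Finset.ext_iff.1 h x
    have := hmem a; have := hmem b; have := hmem c; have := hmem d
    have := hmem (b + 1); have := hmem (d + 1)
    omega
  · intro h
    refine ⟨min a c, max b d, by omega, by omega, by omega, ?_⟩
    ext x
    simp only [mem_union, mem_Icc]
    omega

lemma iRel_Icc_iff {n a b c d : ℕ} (ha : 1 ≤ a) (hab : a ≤ b) (hb : b ≤ n + 1)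
    (hc : 1 ≤ c) (hcd : c ≤ d) (hd : d ≤ n + 1) :
    iRel n (Icc a b) (Icc c d) ↔ Crosses (a - 1, b + 1) (c - 1, d + 1) := by
  rw [iRel, Ne, Ne, Ne, Icc_inter_Icc_eq_empty_iff hab hcd, inter_eq_left, inter_eq_right,
    Icc_subset_Icc_iff hab, Icc_subset_Icc_iff hcd,
    isInterval_Icc_union_Icc_iff ha hab hb hc hcd hd, Crosses]
  omega

noncomputable def chord (I : Finset ℕ) : ℕ × ℕ := (sInf (I : Set ℕ) - 1, sSup (I : Set ℕ) + 1)

lemma chord_Icc {a b : ℕ} (h : a ≤ b) : chord (Icc a b) = (a - 1, b + 1) := by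
  simp [chord, coe_Icc, csInf_Icc h, csSup_Icc h]

lemma IsInterval.chord_lt {n : ℕ} {I : Finset ℕ} (h : IsInterval n I) :
    (chord I).1 < (chord I).2 ∧ (chord I).2 < n + 3 := by
  obtain ⟨a, b, ha, hab, hb, rfl⟩ := h
  rw [chord_Icc hab]
  omega

lemma injOn_chord (n : ℕ) : Set.InjOn chord {I | IsInterval n I} := by
  rintro _ ⟨a, b, ha, hab, -, rfl⟩ _ ⟨c, d, hc, hcd, -, rfl⟩ h
  rw [chord_Icc hab, chord_Icc hcd, Prod.ext_iff] at h
  obtain ⟨h₁, h₂⟩ := h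
  rw [show a = c by omega, show b = d by omega]

lemma iRel_iff_crosses {n : ℕ} {I J : Finset ℕ} (hI : IsInterval n I) (hJ : IsInterval n J) :
    iRel n I J ↔ Crosses (chord I) (chord J) := by
  obtain ⟨a, b, ha, hab, hb, rfl⟩ := hI
  obtain ⟨c, d, hc, hcd, hd, rfl⟩ := hJ
  rw [chord_Icc hab, chord_Icc hcd]
  exact iRel_Icc_iff ha hab hb hc hcd hd

lemma facetMeets_iff_not_iRel {n : ℕ} {I J : Finset ℕ} : facetMeets n I J ↔ ¬iRel n I J := by
  unfold facetMeets iRel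
  tauto

lemma setOf_isInterval_finite (n : ℕ) : {I | IsInterval n I}.Finite := by
  refine (Icc 1 (n + 1)).powerset.finite_toSet.subset ?_
  rintro _ ⟨a, b, ha, -, hb, rfl⟩
  exact mem_powerset.2 (Icc_subset_Icc ha hb)

lemma iCount_eq_ncard (n : ℕ) (γ : Finset ℕ) :
    iCount n γ = {J | IsInterval n J ∧ iRel n γ J}.ncard :=
  Nat.card_coe_set_eq _

lemma iCount_le_iMax {n : ℕ} {γ : Finset ℕ} (hγ : IsInterval n γ) : iCount n γ ≤ iMax n := by
  refine le_csSup ⟨{I | IsInterval n I}.ncard, ?_⟩ ⟨γ, hγ, rfl⟩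
  rintro _ ⟨γ, -, rfl⟩
  rw [iCount_eq_ncard]
  exact Set.ncard_le_ncard (fun J hJ => hJ.1) (setOf_isInterval_finite n)

lemma mul_le_iMax {n u v : ℕ} (hu : 1 ≤ u) (huv : u + v = n + 1) :
    u * v ≤ iMax n := by
  -- the intervals `[a, b]` with `2 ≤ a ≤ u + 1 ≤ b` all cross `[1, u]`
  set T := (Icc 2 (u + 1) ×ˢ Icc (u + 1) (n + 1)).image fun p => Icc p.1 p.2
  have hT : T.card = u * v := by
    rw [card_image_of_injOn, card_product, Nat.card_Icc, Nat.card_Icc]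
    · congr 1; omega
    rintro ⟨a, b⟩ hab ⟨c, d⟩ hcd h
    simp only [coe_product, Set.mem_prod, mem_coe, mem_Icc] at hab hcd
    have := congrArg chord h
    simp only [chord_Icc (show a ≤ b by omega), chord_Icc (show c ≤ d by omega),
      Prod.mk.injEq] at this ⊢
    omega
  have hγ : IsInterval n (Icc 1 u) := ⟨1, u, le_rfl, hu, by omega, rfl⟩
  refine le_trans ?_ (iCount_le_iMax hγ)
  rw [iCount_eq_ncard, ← hT, ← Set.ncard_coe_finset]
  refine Set.ncard_le_ncard ?_ ((setOf_isInterval_finite n).subset fun J hJ => hJ.1)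
  intro J hJ
  simp only [T, coe_image, coe_product, Set.mem_image, Set.mem_prod, mem_coe, mem_Icc] at hJ
  obtain ⟨⟨a, b⟩, ⟨⟨ha, ha'⟩, hb, hb'⟩, rfl⟩ := hJ
  refine ⟨⟨a, b, by omega, by omega, hb', rfl⟩, ?_⟩
  rw [iRel_Icc_iff le_rfl hu (by omega) (by omega) (by omega) hb', Crosses]
  omega

lemma reachable_of_not_iRel {n : ℕ} {S : Finset (Finset ℕ)} {I J : {I // I ∈ S}}
    (h : ¬iRel n I.1 J.1) :
    (SimpleGraph.fromRel fun I J : {I // I ∈ S} => facetMeets n I.1 J.1).Reachable I J := by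
  by_cases hIJ : I = J
  · exact hIJ ▸ .refl _
  · exact SimpleGraph.Adj.reachable <|
      (SimpleGraph.fromRel_adj _ _ _).2 ⟨hIJ, .inl (facetMeets_iff_not_iRel.2 h)⟩

theorem stmt11 {n : ℕ} (S : Finset (Finset ℕ))
    (hS : ∀ I ∈ S, IsInterval n I ∧ I ≠ Finset.Icc 1 (n + 1))
    (hcard : iMax n < S.card) :
    Nat.card
      (SimpleGraph.fromRel
        fun I J : {I // I ∈ S} => facetMeets n I.1 J.1).ConnectedComponent ≤ 2 := by
  by_contra! h3
  have hI : ∀ v : {I // I ∈ S}, IsInterval n v.1 := fun v => (hS v.1 v.2).1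
  let f : {I // I ∈ S} ↪ ℕ × ℕ :=
    ⟨fun v => chord v.1, fun v w h => Subtype.ext (injOn_chord n (hI v) (hI w) h)⟩
  obtain ⟨u, v, hu, huv, hSuv⟩ := card_le_mul_of_two_lt_card_connectedComponent (N := n + 3) _
    f (fun v => (hI v).chord_lt)
    (fun v w h => reachable_of_not_iRel ((iRel_iff_crosses (hI v) (hI w)).not.2 h)) h3
  rw [Fintype.card_coe] at hSuv
  have := mul_le_iMax hu (show u + v = n + 1 by omega)
  omega
end

section
/- Let B₀ be a building set on [n+1] and S a nonempty subset of [n+1]. Then the maximal elements of B₀ contained in S are pairwise disjoint and their union, together with the singletons of remaining elements of S, partitions S; this partition is exactly the minimal decomposition of S into elements of B₀. -/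
def IsBuildingSet {n : ℕ} (B : Set (Finset (Fin (n + 1)))) : Prop :=
  (∀ S ∈ B, S.Nonempty) ∧ (∀ i : Fin (n + 1), {i} ∈ B) ∧
    (∀ S₁ ∈ B, ∀ S₂ ∈ B, (S₁ ∩ S₂).Nonempty → S₁ ∪ S₂ ∈ B)

def IsDecomposition {n : ℕ} (B₀ : Set (Finset (Fin (n + 1))))
    (S : Finset (Fin (n + 1))) (P : Finset (Finset (Fin (n + 1)))) : Prop :=
  (∀ T ∈ P, T ∈ B₀) ∧ (∀ T₁ ∈ P, ∀ T₂ ∈ P, T₁ ≠ T₂ → T₁ ∩ T₂ = ∅) ∧ P.sup id = S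

/-! Two maximal members of `B₀` inside `S` that meet have their union in `B₀` and inside `S`, so
they coincide; hence the maximal members are disjoint, and they cover `S` since every singleton
extends to one. Sending each block of a decomposition to the maximal member containing it is onto
the maximal members; for a minimal decomposition there are no more blocks than maximal members,
so this map is injective and every block fills its maximal member. -/

open Finset

section

variable {n : ℕ} {B : Set (Finset (Fin (n + 1)))} {S : Finset (Fin (n + 1))}

theorem setOf_maximal_eq :
    {T | T ∈ B ∧ T ⊆ S ∧ ∀ T' ∈ B, T' ⊆ S → T ⊆ T' → T = T'} =
      {T | Maximal (fun T => T ∈ B ∧ T ⊆ S) T} := by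
  ext T
  simp only [Set.mem_ofPred_eq, maximal_iff, and_assoc, and_imp]

theorem exists_maximal_superset {T : Finset (Fin (n + 1))} (hT : T ∈ B) (hTS : T ⊆ S) :
    ∃ M, T ⊆ M ∧ Maximal (fun T => T ∈ B ∧ T ⊆ S) M :=
  Finite.exists_le_maximal ⟨hT, hTS⟩

open Classical in
noncomputable def maximals (B : Set (Finset (Fin (n + 1)))) (S : Finset (Fin (n + 1))) :
    Finset (Finset (Fin (n + 1))) :=
  {T | Maximal (fun T => T ∈ B ∧ T ⊆ S) T}

theorem mem_maximals {T : Finset (Fin (n + 1))} :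
    T ∈ maximals B S ↔ Maximal (fun T => T ∈ B ∧ T ⊆ S) T := by
  simp [maximals]

namespace IsDecomposition

variable {Q : Finset (Finset (Fin (n + 1)))} (hQ : IsDecomposition B S Q)
include hQ

theorem subset_of_mem {T : Finset (Fin (n + 1))} (hT : T ∈ Q) : T ⊆ S :=
  hQ.2.2 ▸ le_sup (f := id) hT

theorem exists_mem_of_mem {x : Fin (n + 1)} (hx : x ∈ S) : ∃ T ∈ Q, x ∈ T :=
  mem_sup.1 (hQ.2.2.symm ▸ hx)

end IsDecomposition

namespace IsBuildingSet

variable (hB : IsBuildingSet B)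
include hB

theorem eq_of_maximal_of_mem {T₁ T₂ : Finset (Fin (n + 1))}
    (h₁ : Maximal (fun T => T ∈ B ∧ T ⊆ S) T₁) (h₂ : Maximal (fun T => T ∈ B ∧ T ⊆ S) T₂)
    {x : Fin (n + 1)} (hx₁ : x ∈ T₁) (hx₂ : x ∈ T₂) : T₁ = T₂ := by
  have hunion : T₁ ∪ T₂ ∈ B ∧ T₁ ∪ T₂ ⊆ S :=
    ⟨hB.2.2 _ h₁.1.1 _ h₂.1.1 ⟨x, mem_inter.2 ⟨hx₁, hx₂⟩⟩, union_subset h₁.1.2 h₂.1.2⟩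
  exact (h₁.eq_of_ge hunion subset_union_left).symm.trans (h₂.eq_of_ge hunion subset_union_right)

theorem inter_eq_empty_of_maximal {T₁ T₂ : Finset (Fin (n + 1))}
    (h₁ : Maximal (fun T => T ∈ B ∧ T ⊆ S) T₁) (h₂ : Maximal (fun T => T ∈ B ∧ T ⊆ S) T₂)
    (hne : T₁ ≠ T₂) : T₁ ∩ T₂ = ∅ :=
  eq_empty_of_forall_notMem fun _ hx =>
    hne (hB.eq_of_maximal_of_mem h₁ h₂ (mem_inter.1 hx).1 (mem_inter.1 hx).2)

theorem existsUnique_maximal_mem {x : Fin (n + 1)} (hx : x ∈ S) :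
    ∃! T, Maximal (fun T => T ∈ B ∧ T ⊆ S) T ∧ x ∈ T := by
  obtain ⟨M, hxM, hM⟩ := exists_maximal_superset (hB.2.1 x) (singleton_subset_iff.2 hx)
  exact ⟨M, ⟨hM, hxM (mem_singleton_self x)⟩, fun T ⟨hT, hxT⟩ =>
    hB.eq_of_maximal_of_mem hT hM hxT (hxM (mem_singleton_self x))⟩

theorem isDecomposition_maximals : IsDecomposition B S (maximals B S) := by
  refine ⟨fun T hT => (mem_maximals.1 hT).1.1, fun T₁ h₁ T₂ h₂ =>
    hB.inter_eq_empty_of_maximal (mem_maximals.1 h₁) (mem_maximals.1 h₂), ?_⟩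
  refine (Finset.sup_le fun T hT => (mem_maximals.1 hT).1.2).antisymm fun x hx => ?_
  obtain ⟨M, ⟨hM, hxM⟩, -⟩ := hB.existsUnique_maximal_mem hx
  exact mem_sup.2 ⟨M, mem_maximals.2 hM, hxM⟩

theorem coe_eq_maximals_of_card_le {Q : Finset (Finset (Fin (n + 1)))}
    (hQ : IsDecomposition B S Q) (hcard : #Q ≤ #(maximals B S)) :
    (Q : Set (Finset (Fin (n + 1)))) = {T | Maximal (fun T => T ∈ B ∧ T ⊆ S) T} := by
  have hsup : ∀ T ∈ Q, ∃ M ∈ maximals B S, T ⊆ M := fun T hT =>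
    let ⟨M, hTM, hM⟩ := exists_maximal_superset (hQ.1 T hT) (hQ.subset_of_mem hT)
    ⟨M, mem_maximals.2 hM, hTM⟩
  choose! m hmM hTm using hsup
  have hmem : ∀ T ∈ Q, ∀ y ∈ T, ∀ M ∈ maximals B S, y ∈ M → m T = M :=
    fun T hT y hyT M hM hyM =>
      hB.eq_of_maximal_of_mem (mem_maximals.1 (hmM T hT)) (mem_maximals.1 hM) (hTm T hT hyT) hyM
  have hsurj : Set.SurjOn m Q (maximals B S) := fun M hM => by
    obtain ⟨y, hyM⟩ := hB.1 M (mem_maximals.1 hM).1.1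
    obtain ⟨T, hT, hyT⟩ := hQ.exists_mem_of_mem ((mem_maximals.1 hM).1.2 hyM)
    exact ⟨T, hT, hmem T hT y hyT M hM hyM⟩
  have hinj := injOn_of_surjOn_of_card_le m hmM hsurj hcard
  have hfix : ∀ T ∈ Q, m T = T := fun T hT => by
    refine (hTm T hT).antisymm' fun y hy => ?_
    obtain ⟨U, hU, hyU⟩ := hQ.exists_mem_of_mem ((mem_maximals.1 (hmM T hT)).1.2 hy)
    rwa [← hinj hU hT (hmem U hU y hyU _ (hmM T hT) hy)]
  ext T
  refine ⟨fun hT => mem_maximals.1 (hfix T hT ▸ hmM T hT), fun hT => ?_⟩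
  obtain ⟨U, hU, rfl⟩ := hsurj (mem_maximals.2 hT)
  rwa [hfix U hU]

end IsBuildingSet

end

theorem stmt16_general {n : ℕ} (B₀ : Set (Finset (Fin (n + 1)))) (h0 : IsBuildingSet B₀)
    (S : Finset (Fin (n + 1)))
    (M : Set (Finset (Fin (n + 1))))
    (hM : M = {T | T ∈ B₀ ∧ T ⊆ S ∧ ∀ T' ∈ B₀, T' ⊆ S → T ⊆ T' → T = T'}) :
    (∀ T₁ ∈ M, ∀ T₂ ∈ M, T₁ ≠ T₂ → T₁ ∩ T₂ = ∅) ∧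
    (∀ x ∈ S, ∃! T, T ∈ M ∧ x ∈ T) ∧
    ∀ Q : Finset (Finset (Fin (n + 1))),
      IsDecomposition B₀ S Q →
      (∀ Q' : Finset (Finset (Fin (n + 1))), IsDecomposition B₀ S Q' → Q.card ≤ Q'.card) →
      ↑Q = M := by
  rw [hM, setOf_maximal_eq]
  exact ⟨fun T₁ h₁ T₂ h₂ => h0.inter_eq_empty_of_maximal h₁ h₂,
    fun x hx => h0.existsUnique_maximal_mem hx,
    fun Q hQ hmin => h0.coe_eq_maximals_of_card_le hQ (hmin _ h0.isDecomposition_maximals)⟩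

theorem stmt16 {n : ℕ} (B₀ : Set (Finset (Fin (n + 1)))) (h0 : IsBuildingSet B₀)
    (S : Finset (Fin (n + 1))) (hS : S.Nonempty)
    (M : Set (Finset (Fin (n + 1))))
    (hM : M = {T | T ∈ B₀ ∧ T ⊆ S ∧ ∀ T' ∈ B₀, T' ⊆ S → T ⊆ T' → T = T'}) :
    (∀ T₁ ∈ M, ∀ T₂ ∈ M, T₁ ≠ T₂ → T₁ ∩ T₂ = ∅) ∧
    (∀ x ∈ S, ∃! T, T ∈ M ∧ x ∈ T) ∧
    ∀ Q : Finset (Finset (Fin (n + 1))),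
      IsDecomposition B₀ S Q →
      (∀ Q' : Finset (Finset (Fin (n + 1))), IsDecomposition B₀ S Q' → Q.card ≤ Q'.card) →
      ↑Q = M :=
  stmt16_general B₀ h0 S M hM
end
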